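/- arXiv:2211.12638 — 4 statements merged into one kernel-verified Lean document; each statement's English description precedes it below -/
import Mathlib

section
/- Let f : ℝ^d → ℝ be convex, G-Lipschitz and nonnegative, let K be a convex set of diameter at most D contained in the ball of radius 3D, containing rB_d, and define f̂(x) = f(x) + 3GD(γ(x) − 1) where γ is the Minkowski regularization of K. Then for any y ∈ ℝ^d with ‖y‖₂ ≤ 3Dγ(y), the Minkowski projection x = y/γ(y) satisfies f̂(x) ≤ f̂(y). -/
noncomputable def mink {d : ℕ} (K : Set (EuclideanSpace ℝ (Fin d)))
    (x : EuclideanSpace ℝ (Fin d)) : ℝ :=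
  sInf {c : ℝ | 1 ≤ c ∧ c⁻¹ • x ∈ K}

lemma mink_set_nonempty {d : ℕ} {K : Set (EuclideanSpace ℝ (Fin d))} {r : ℝ} (hr : 0 < r)
    (hball : Metric.closedBall (0 : EuclideanSpace ℝ (Fin d)) r ⊆ K)
    (x : EuclideanSpace ℝ (Fin d)) :
    {c : ℝ | 1 ≤ c ∧ c⁻¹ • x ∈ K}.Nonempty := by
  refine ⟨max 1 (‖x‖ / r), le_max_left _ _, hball ?_⟩
  have hc1 : (1:ℝ) ≤ max 1 (‖x‖ / r) := le_max_left _ _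
  have hcpos : (0:ℝ) < max 1 (‖x‖ / r) := lt_of_lt_of_le one_pos hc1
  rw [Metric.mem_closedBall, dist_zero_right, norm_smul, norm_inv, Real.norm_eq_abs,
    abs_of_pos hcpos]
  rw [inv_mul_le_iff₀ hcpos]
  calc ‖x‖ = r * (‖x‖ / r) := by field_simp
    _ ≤ r * max 1 (‖x‖ / r) := by
        exact mul_le_mul_of_nonneg_left (le_max_right _ _) hr.le
    _ = max 1 (‖x‖ / r) * r := mul_comm _ _

lemma mink_bddBelow {d : ℕ} (K : Set (EuclideanSpace ℝ (Fin d)))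
    (x : EuclideanSpace ℝ (Fin d)) :
    BddBelow {c : ℝ | 1 ≤ c ∧ c⁻¹ • x ∈ K} := ⟨1, fun c hc => hc.1⟩

lemma one_le_mink {d : ℕ} {K : Set (EuclideanSpace ℝ (Fin d))} {r : ℝ} (hr : 0 < r)
    (hball : Metric.closedBall (0 : EuclideanSpace ℝ (Fin d)) r ⊆ K)
    (x : EuclideanSpace ℝ (Fin d)) : 1 ≤ mink K x :=
  le_csInf (mink_set_nonempty hr hball x) (fun c hc => hc.1)

lemma mink_mem {d : ℕ} {K : Set (EuclideanSpace ℝ (Fin d))} {r : ℝ} (hr : 0 < r)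
    (hcl : IsClosed K)
    (hball : Metric.closedBall (0 : EuclideanSpace ℝ (Fin d)) r ⊆ K)
    (x : EuclideanSpace ℝ (Fin d)) :
    1 ≤ mink K x ∧ (mink K x)⁻¹ • x ∈ K := by
  have hS : {c : ℝ | 1 ≤ c ∧ c⁻¹ • x ∈ K} =
      Set.Ici 1 ∩ (fun c : ℝ => c⁻¹ • x) ⁻¹' K := rfl
  have hclS : IsClosed {c : ℝ | 1 ≤ c ∧ c⁻¹ • x ∈ K} := by
    rw [hS]
    apply ContinuousOn.preimage_isClosed_of_isClosed _ isClosed_Ici hcl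
    apply ContinuousOn.fun_smul _ continuousOn_const
    exact ContinuousOn.inv₀ continuousOn_id
      (fun c hc => ne_of_gt (lt_of_lt_of_le one_pos hc))
  have := hclS.csInf_mem (mink_set_nonempty hr hball x) (mink_bddBelow K x)
  exact this

/-- The Minkowski projection only reduces the value of the regularized loss
`f̂(x) = f(x) + 3GD(γ(x) - 1)`. -/
theorem minkowski_projection_reduces_regularized_loss {d : ℕ}
    (K : Set (EuclideanSpace ℝ (Fin d))) (r D G : ℝ)
    (hr : 0 < r) (hG : 1 ≤ G) (hD : 1 ≤ D)
    (hK : Convex ℝ K) (hcl : IsClosed K)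
    (hball : Metric.closedBall (0 : EuclideanSpace ℝ (Fin d)) r ⊆ K)
    (hdiam : Metric.diam K ≤ D)
    (hKD : K ⊆ Metric.closedBall (0 : EuclideanSpace ℝ (Fin d)) (3 * D))
    (f : EuclideanSpace ℝ (Fin d) → ℝ)
    (hconv : ConvexOn ℝ Set.univ f)
    (hLip : ∀ x y : EuclideanSpace ℝ (Fin d), |f x - f y| ≤ G * ‖x - y‖)
    (hnonneg : ∀ x, 0 ≤ f x)
    (y : EuclideanSpace ℝ (Fin d)) (hy : ‖y‖ ≤ 3 * D * mink K y) :
    f ((mink K y)⁻¹ • y) + 3 * G * D * (mink K ((mink K y)⁻¹ • y) - 1) ≤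
      f y + 3 * G * D * (mink K y - 1) := by
  obtain ⟨hγ1, hxK⟩ := mink_mem hr hcl hball y
  set γ := mink K y with hγ
  have hγpos : 0 < γ := lt_of_lt_of_le one_pos hγ1
  set x := γ⁻¹ • y with hx
  -- mink K x = 1
  have hmx : mink K x = 1 := by
    refine le_antisymm ?_ (one_le_mink hr hball x)
    apply csInf_le (mink_bddBelow K x)
    exact ⟨le_refl 1, by simpa using hxK⟩
  rw [hmx]
  -- Lipschitz bound
  have hnorm : ‖x - y‖ = (1 - γ⁻¹) * ‖y‖ := by
    have : x - y = (γ⁻¹ - 1) • y := by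
      rw [hx, sub_smul, one_smul]
    rw [this, norm_smul, Real.norm_eq_abs, abs_of_nonpos (by
      have : γ⁻¹ ≤ 1 := inv_le_one_of_one_le₀ hγ1
      linarith)]
    ring
  have hkey : ‖x - y‖ ≤ 3 * D * (γ - 1) := by
    rw [hnorm]
    have h1 : 1 - γ⁻¹ ≥ 0 := by
      have : γ⁻¹ ≤ 1 := inv_le_one_of_one_le₀ hγ1
      linarith
    calc (1 - γ⁻¹) * ‖y‖ ≤ (1 - γ⁻¹) * (3 * D * γ) :=
          mul_le_mul_of_nonneg_left hy h1
      _ = 3 * D * (γ - γ⁻¹ * γ) := by ring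
      _ = 3 * D * (γ - 1) := by rw [inv_mul_cancel₀ (ne_of_gt hγpos)]
  have hfl : f x - f y ≤ G * ‖x - y‖ := (le_abs_self _).trans (hLip x y)
  have hGpos : (0:ℝ) < G := lt_of_lt_of_le one_pos hG
  have : f x - f y ≤ G * (3 * D * (γ - 1)) :=
    hfl.trans (mul_le_mul_of_nonneg_left hkey hGpos.le)
  nlinarith
end

section
/- If f : ℝ^d → ℝ is convex and G-Lipschitz and K is convex containing rB_d with diameter ≤ D, then the regularized function f̂(x) = f(x) + 3GD(γ(x) − 1) is convex and (G + 3GD/r)-Lipschitz, where γ is the Minkowski regularization of K. -/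
open Metric Set
open scoped NNReal

lemma mink_eq {d : ℕ} {K : Set (EuclideanSpace ℝ (Fin d))} {r : ℝ} (hr : 0 < r)
    (hK : Convex ℝ K)
    (hball : Metric.closedBall (0 : EuclideanSpace ℝ (Fin d)) r ⊆ K)
    (x : EuclideanSpace ℝ (Fin d)) :
    mink K x = max 1 (gauge K x) := by
  have h0 : (0 : EuclideanSpace ℝ (Fin d)) ∈ K :=
    hball (by simp [hr.le])
  have habs : Absorbent ℝ K :=
    (absorbent_ball_zero hr).mono (ball_subset_closedBall.trans hball)
  have hlb : ∀ c ∈ {c : ℝ | 1 ≤ c ∧ c⁻¹ • x ∈ K}, max 1 (gauge K x) ≤ c := by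
    rintro c ⟨hc1, hcK⟩
    have hc0 : 0 < c := lt_of_lt_of_le one_pos hc1
    refine max_le hc1 ?_
    refine gauge_le_of_mem hc0.le ?_
    refine ⟨c⁻¹ • x, hcK, ?_⟩
    simp [smul_smul, mul_inv_cancel₀ hc0.ne']
  have hbdd : BddBelow {c : ℝ | 1 ≤ c ∧ c⁻¹ • x ∈ K} := ⟨max 1 (gauge K x), hlb⟩
  have hmem : ∀ c : ℝ, max 1 (gauge K x) < c → c ∈ {c : ℝ | 1 ≤ c ∧ c⁻¹ • x ∈ K} := by
    intro c hc
    have hc1 : 1 ≤ c := le_of_lt (lt_of_le_of_lt (le_max_left _ _) hc)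
    have hc0 : 0 < c := lt_of_lt_of_le one_pos hc1
    refine ⟨hc1, ?_⟩
    have hg : gauge K (c⁻¹ • x) < 1 := by
      rw [gauge_smul_of_nonneg (inv_nonneg.2 hc0.le)]
      have hlt : gauge K x < c := lt_of_le_of_lt (le_max_right _ _) hc
      calc c⁻¹ • gauge K x = c⁻¹ * gauge K x := rfl
        _ < c⁻¹ * c := mul_lt_mul_of_pos_left hlt (inv_pos.2 hc0)
        _ = 1 := inv_mul_cancel₀ hc0.ne'
    exact gauge_lt_one_subset_self hK h0 habs hg
  refine le_antisymm ?_ (le_csInf ⟨_, hmem _ (lt_add_one _)⟩ hlb)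
  refine le_of_forall_pos_le_add fun ε hε => ?_
  exact csInf_le hbdd (hmem _ (lt_add_of_pos_right _ hε))

lemma convexOn_gauge' {d : ℕ} {K : Set (EuclideanSpace ℝ (Fin d))}
    (hK : Convex ℝ K) (habs : Absorbent ℝ K) :
    ConvexOn ℝ Set.univ (gauge K) := by
  refine ⟨convex_univ, fun x _ y _ a b ha hb _ => ?_⟩
  calc gauge K (a • x + b • y) ≤ gauge K (a • x) + gauge K (b • y) :=
        gauge_add_le hK habs _ _
    _ = a * gauge K x + b * gauge K y := by
        rw [gauge_smul_of_nonneg ha, gauge_smul_of_nonneg hb]; rfl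

theorem regularized_loss_convex_lipschitz {d : ℕ}
    (K : Set (EuclideanSpace ℝ (Fin d))) (r D G : ℝ)
    (hr : 0 < r) (hG : 0 < G) (hD : 0 < D)
    (hK : Convex ℝ K)
    (hball : Metric.closedBall (0 : EuclideanSpace ℝ (Fin d)) r ⊆ K)
    (hdiam : Metric.diam K ≤ D)
    (f : EuclideanSpace ℝ (Fin d) → ℝ)
    (hconv : ConvexOn ℝ Set.univ f)
    (hLip : ∀ x y : EuclideanSpace ℝ (Fin d), |f x - f y| ≤ G * ‖x - y‖) :
    ConvexOn ℝ Set.univ (fun x => f x + 3 * G * D * (mink K x - 1)) ∧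
      ∀ x y : EuclideanSpace ℝ (Fin d),
        |(f x + 3 * G * D * (mink K x - 1)) - (f y + 3 * G * D * (mink K y - 1))| ≤
          (G + 3 * G * D / r) * ‖x - y‖ := by
  have habs : Absorbent ℝ K :=
    (absorbent_ball_zero hr).mono (ball_subset_closedBall.trans hball)
  have hmink : ∀ x, mink K x = max 1 (gauge K x) := mink_eq hr hK hball
  have hmc : ConvexOn ℝ Set.univ (mink K) := by
    have h1 : ConvexOn ℝ Set.univ (fun _ : EuclideanSpace ℝ (Fin d) => (1 : ℝ)) :=
      convexOn_const _ convex_univ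
    have := h1.sup (convexOn_gauge' hK habs)
    refine this.congr ?_
    intro x _
    exact (hmink x).symm
  have hcd : (0 : ℝ) ≤ 3 * G * D := by positivity
  have hminkLip : ∀ x y, |mink K x - mink K y| ≤ ‖x - y‖ / r := by
    intro x y
    have hlip : LipschitzWith (⟨r, hr.le⟩ : ℝ≥0)⁻¹ (gauge K) :=
      hK.lipschitzWith_gauge hr (ball_subset_closedBall.trans hball)
    have := hlip.dist_le_mul x y
    rw [Real.dist_eq, dist_eq_norm] at this
    have hg : |gauge K x - gauge K y| ≤ r⁻¹ * ‖x - y‖ := by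
      have hc : (((⟨r, hr.le⟩ : ℝ≥0)⁻¹ : ℝ≥0) : ℝ) = r⁻¹ := NNReal.coe_inv ⟨r, hr.le⟩
      simpa [hc] using this
    rw [hmink x, hmink y]
    calc |max 1 (gauge K x) - max 1 (gauge K y)|
        = |max (gauge K x) 1 - max (gauge K y) 1| := by rw [max_comm, max_comm (gauge K y)]
      _ ≤ |gauge K x - gauge K y| := abs_max_sub_max_le_abs _ _ _
      _ ≤ r⁻¹ * ‖x - y‖ := hg
      _ = ‖x - y‖ / r := by rw [div_eq_inv_mul]
  constructor
  · have h2 : ConvexOn ℝ Set.univ (fun x => 3 * G * D * (mink K x - 1)) := by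
      have := (hmc.smul hcd).add_const (-(3 * G * D))
      refine this.congr fun x _ => ?_
      simp [smul_eq_mul]; ring
    exact hconv.add h2
  · intro x y
    have h1 := hLip x y
    have h2 := hminkLip x y
    calc |(f x + 3 * G * D * (mink K x - 1)) - (f y + 3 * G * D * (mink K y - 1))|
        = |(f x - f y) + 3 * G * D * (mink K x - mink K y)| := by ring_nf
      _ ≤ |f x - f y| + |3 * G * D * (mink K x - mink K y)| := abs_add_le _ _
      _ = |f x - f y| + 3 * G * D * |mink K x - mink K y| := by
          rw [abs_mul, abs_of_nonneg hcd]
      _ ≤ G * ‖x - y‖ + 3 * G * D * (‖x - y‖ / r) := by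
          gcongr
      _ = (G + 3 * G * D / r) * ‖x - y‖ := by field_simp
end

section
/- If the boundary of a closed convex set K ⊆ ℝ^d (with 0 in its interior) is a smooth manifold with unique outer unit normal v(z) at each boundary point z, then for x ∉ K the gradient of γ(x) = inf{c ≥ 1 : x/c ∈ K} equals v(Π_γ(x)) / (Π_γ(x)ᵀ v(Π_γ(x))), where Π_γ(x) = x/γ(x). -/
open scoped RealInnerProductSpace

section Aux

open Filter Topology

variable {d : ℕ} {K : Set (EuclideanSpace ℝ (Fin d))}
  {v : EuclideanSpace ℝ (Fin d) → EuclideanSpace ℝ (Fin d)}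

/-- The candidate gradient function. -/
noncomputable def wfn (K : Set (EuclideanSpace ℝ (Fin d)))
    (v : EuclideanSpace ℝ (Fin d) → EuclideanSpace ℝ (Fin d))
    (y : EuclideanSpace ℝ (Fin d)) : EuclideanSpace ℝ (Fin d) :=
  (⟪(gauge K y)⁻¹ • y, v ((gauge K y)⁻¹ • y)⟫)⁻¹ • v ((gauge K y)⁻¹ • y)

private lemma mem_of_gauge_le_one' (hcl : IsClosed K) (hconv : Convex ℝ K)
    (h0 : K ∈ 𝓝 0) {y : EuclideanSpace ℝ (Fin d)} (h : gauge K y ≤ 1) : y ∈ K := by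
  have := (gauge_le_one_iff_mem_closure hconv h0).mp h
  rwa [hcl.closure_eq] at this

private lemma smul_mem_of_gauge_le (hcl : IsClosed K) (hconv : Convex ℝ K)
    (h0 : K ∈ 𝓝 0) {u : EuclideanSpace ℝ (Fin d)} {c : ℝ} (hc : 0 < c)
    (h : gauge K u ≤ c) : c⁻¹ • u ∈ K := by
  apply mem_of_gauge_le_one' hcl hconv h0
  rw [gauge_smul_of_nonneg (inv_nonneg.2 hc.le), smul_eq_mul]
  rw [inv_mul_le_one₀ hc]
  exact h

private lemma mink_eq_gauge (hcl : IsClosed K) (hconv : Convex ℝ K)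
    (h0 : K ∈ 𝓝 0) {y : EuclideanSpace ℝ (Fin d)} (hy : 1 < gauge K y) :
    mink K y = gauge K y := by
  have hset : {c : ℝ | 1 ≤ c ∧ c⁻¹ • y ∈ K} = Set.Ici (gauge K y) := by
    ext c
    simp only [Set.mem_setOf_eq, Set.mem_Ici]
    constructor
    · rintro ⟨h1, hc⟩
      have hc0 : (0 : ℝ) < c := lt_of_lt_of_le one_pos h1
      have h2 : gauge K (c⁻¹ • y) ≤ 1 := gauge_le_one_of_mem hc
      rw [gauge_smul_of_nonneg (inv_nonneg.2 hc0.le), smul_eq_mul,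
        inv_mul_le_one₀ hc0] at h2
      exact h2
    · intro h
      have hc0 : (0 : ℝ) < c := lt_of_lt_of_le (lt_trans one_pos hy) h
      exact ⟨le_trans hy.le h, smul_mem_of_gauge_le hcl hconv h0 hc0 h⟩
  rw [mink, hset, csInf_Ici]

private lemma normalized_mem_frontier (hconv : Convex ℝ K) (h0 : K ∈ 𝓝 0)
    {y : EuclideanSpace ℝ (Fin d)} (hy : 0 < gauge K y) :
    (gauge K y)⁻¹ • y ∈ frontier K := by
  have : gauge K ((gauge K y)⁻¹ • y) = 1 := by
    rw [gauge_smul_of_nonneg (inv_nonneg.2 hy.le), smul_eq_mul, inv_mul_cancel₀ hy.ne']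
  exact (gauge_eq_one_iff_mem_frontier hconv h0).mp this

private lemma inner_vz_pos (h0 : K ∈ 𝓝 0)
    (hvnorm : ∀ z ∈ frontier K, ‖v z‖ = 1)
    (hvsupport : ∀ z ∈ frontier K, ∀ y ∈ K, ⟪v z, y⟫ ≤ ⟪v z, z⟫)
    {z : EuclideanSpace ℝ (Fin d)} (hz : z ∈ frontier K) : 0 < ⟪v z, z⟫ := by
  obtain ⟨r, hr0, hrK⟩ := Metric.mem_nhds_iff.mp h0
  have hball : (r / 2) • v z ∈ K := by
    apply hrK
    rw [Metric.mem_ball, dist_zero_right, norm_smul, hvnorm z hz, mul_one,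
      Real.norm_eq_abs, abs_of_pos (half_pos hr0)]
    linarith
  have h1 := hvsupport z hz _ hball
  rw [real_inner_smul_right, real_inner_self_eq_norm_sq, hvnorm z hz] at h1
  have : (0 : ℝ) < r / 2 * (1 : ℝ) ^ 2 := by norm_num; linarith
  linarith

private lemma support_scaled (hcl : IsClosed K) (hconv : Convex ℝ K) (h0 : K ∈ 𝓝 0)
    (hvnorm : ∀ z ∈ frontier K, ‖v z‖ = 1)
    (hvsupport : ∀ z ∈ frontier K, ∀ y ∈ K, ⟪v z, y⟫ ≤ ⟪v z, z⟫)
    {z : EuclideanSpace ℝ (Fin d)} (hz : z ∈ frontier K)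
    (u : EuclideanSpace ℝ (Fin d)) : ⟪v z, u⟫ ≤ gauge K u * ⟪v z, z⟫ := by
  have hp := inner_vz_pos h0 hvnorm hvsupport hz
  have key : ∀ c : ℝ, 0 < c → gauge K u ≤ c → ⟪v z, u⟫ ≤ c * ⟪v z, z⟫ := by
    intro c hc0 hcu
    have hmem := smul_mem_of_gauge_le hcl hconv h0 hc0 hcu
    have h1 := hvsupport z hz _ hmem
    rw [real_inner_smul_right] at h1
    exact (inv_mul_le_iff₀ hc0).mp h1
  refine le_of_forall_gt_imp_ge_of_dense fun b hb => ?_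
  have hb0 : 0 < b := lt_of_le_of_lt (mul_nonneg (gauge_nonneg _) hp.le) hb
  have hc : gauge K u ≤ b / ⟪v z, z⟫ := by
    rw [le_div_iff₀ hp]; exact hb.le
  have := key (b / ⟪v z, z⟫) (div_pos hb0 hp) hc
  rwa [div_mul_cancel₀ _ hp.ne'] at this

private lemma wfn_inner_le (hcl : IsClosed K) (hconv : Convex ℝ K) (h0 : K ∈ 𝓝 0)
    (hvnorm : ∀ z ∈ frontier K, ‖v z‖ = 1)
    (hvsupport : ∀ z ∈ frontier K, ∀ y ∈ K, ⟪v z, y⟫ ≤ ⟪v z, z⟫)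
    {y : EuclideanSpace ℝ (Fin d)} (hy : 0 < gauge K y)
    (u : EuclideanSpace ℝ (Fin d)) : ⟪wfn K v y, u⟫ ≤ gauge K u := by
  set z := (gauge K y)⁻¹ • y with hzdef
  have hz : z ∈ frontier K := normalized_mem_frontier hconv h0 hy
  have hp : 0 < ⟪v z, z⟫ := inner_vz_pos h0 hvnorm hvsupport hz
  have hp' : (0 : ℝ) < ⟪z, v z⟫ := by rwa [real_inner_comm]
  have hpz : (⟪z, v z⟫ : ℝ) = ⟪v z, z⟫ := real_inner_comm _ _
  show ⟪(⟪z, v z⟫)⁻¹ • v z, u⟫ ≤ gauge K u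
  rw [real_inner_smul_left, hpz, inv_mul_le_iff₀ hp, mul_comm]
  exact support_scaled hcl hconv h0 hvnorm hvsupport hz u

private lemma wfn_inner_self (hconv : Convex ℝ K) (h0 : K ∈ 𝓝 0)
    (hvnorm : ∀ z ∈ frontier K, ‖v z‖ = 1)
    (hvsupport : ∀ z ∈ frontier K, ∀ y ∈ K, ⟪v z, y⟫ ≤ ⟪v z, z⟫)
    {y : EuclideanSpace ℝ (Fin d)} (hy : 0 < gauge K y) :
    ⟪wfn K v y, y⟫ = gauge K y := by
  set z := (gauge K y)⁻¹ • y with hzdef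
  have hz : z ∈ frontier K := normalized_mem_frontier hconv h0 hy
  have hp : 0 < ⟪v z, z⟫ := inner_vz_pos h0 hvnorm hvsupport hz
  have hyz : ⟪v z, y⟫ = gauge K y * ⟪v z, z⟫ := by
    have : ⟪v z, z⟫ = (gauge K y)⁻¹ * ⟪v z, y⟫ := by
      rw [hzdef, real_inner_smul_right]
    rw [this, ← mul_assoc, mul_inv_cancel₀ hy.ne', one_mul]
  have hpz : (⟪z, v z⟫ : ℝ) = ⟪v z, z⟫ := real_inner_comm _ _
  show ⟪(⟪z, v z⟫)⁻¹ • v z, y⟫ = gauge K y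
  rw [real_inner_smul_left, hpz, hyz, mul_comm (gauge K y), ← mul_assoc,
    inv_mul_cancel₀ hp.ne', one_mul]

/-- Continuity of the unit normal field follows from its uniqueness by compactness. -/
private lemma v_tendsto (hvnorm : ∀ z ∈ frontier K, ‖v z‖ = 1)
    (hvsupport : ∀ z ∈ frontier K, ∀ y ∈ K, ⟪v z, y⟫ ≤ ⟪v z, z⟫)
    (hvunique : ∀ z ∈ frontier K, ∀ w : EuclideanSpace ℝ (Fin d),
      ‖w‖ = 1 → (∀ y ∈ K, ⟪w, y⟫ ≤ ⟪w, z⟫) → w = v z)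
    {z₀ : EuclideanSpace ℝ (Fin d)} (hz₀ : z₀ ∈ frontier K) :
    Tendsto v (𝓝[frontier K] z₀) (𝓝 (v z₀)) := by
  apply tendsto_of_subseq_tendsto
  intro ns hns
  have hmem : ∀ᶠ n in atTop, ns n ∈ frontier K :=
    hns.eventually_mem self_mem_nhdsWithin
  obtain ⟨N, hN⟩ := eventually_atTop.mp hmem
  set u : ℕ → EuclideanSpace ℝ (Fin d) := fun n => ns (n + N) with hu
  have humem : ∀ n, u n ∈ frontier K := fun n => hN (n + N) (Nat.le_add_left _ _)
  have hutend : Tendsto u atTop (𝓝 z₀) :=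
    ((hns.mono_right nhdsWithin_le_nhds).comp (tendsto_add_atTop_nat N))
  have hsphere : ∀ n, v (u n) ∈ Metric.sphere (0 : EuclideanSpace ℝ (Fin d)) 1 := by
    intro n
    rw [mem_sphere_zero_iff_norm]
    exact hvnorm _ (humem n)
  obtain ⟨w₀, hw₀s, φ, hφ, hφtend⟩ :=
    (isCompact_sphere (0 : EuclideanSpace ℝ (Fin d)) 1).tendsto_subseq hsphere
  have hzlim : Tendsto (fun n => u (φ n)) atTop (𝓝 z₀) :=
    hutend.comp hφ.tendsto_atTop
  have hw₀norm : ‖w₀‖ = 1 := mem_sphere_zero_iff_norm.mp hw₀s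
  have hw₀supp : ∀ y ∈ K, ⟪w₀, y⟫ ≤ ⟪w₀, z₀⟫ := by
    intro y hy
    have h1 : Tendsto (fun n => ⟪v (u (φ n)), y⟫) atTop (𝓝 ⟪w₀, y⟫) :=
      hφtend.inner tendsto_const_nhds
    have h2 : Tendsto (fun n => ⟪v (u (φ n)), u (φ n)⟫) atTop (𝓝 ⟪w₀, z₀⟫) :=
      hφtend.inner hzlim
    exact le_of_tendsto_of_tendsto' h1 h2 fun n => hvsupport _ (humem (φ n)) y hy
  have hw₀ : w₀ = v z₀ := hvunique z₀ hz₀ w₀ hw₀norm hw₀supp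
  refine ⟨fun n => φ n + N, ?_⟩
  rw [← hw₀]
  exact hφtend

end Aux

/-- If the boundary of `K` has a unique outward unit normal `v z` at every boundary
point `z`, then for `x ∉ K` the gradient of the gauge `γ` at `x` equals
`v(Π_γ(x)) / ⟪Π_γ(x), v(Π_γ(x))⟫` where `Π_γ(x) = x / γ(x)`. -/
theorem gauge_gradient_smooth_boundary {d : ℕ}
    (K : Set (EuclideanSpace ℝ (Fin d))) (hcl : IsClosed K) (hconv : Convex ℝ K)
    (h0 : (0 : EuclideanSpace ℝ (Fin d)) ∈ interior K)
    (v : EuclideanSpace ℝ (Fin d) → EuclideanSpace ℝ (Fin d))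
    (hvnorm : ∀ z ∈ frontier K, ‖v z‖ = 1)
    (hvsupport : ∀ z ∈ frontier K, ∀ y ∈ K, ⟪v z, y⟫ ≤ ⟪v z, z⟫)
    (hvunique : ∀ z ∈ frontier K, ∀ w : EuclideanSpace ℝ (Fin d),
      ‖w‖ = 1 → (∀ y ∈ K, ⟪w, y⟫ ≤ ⟪w, z⟫) → w = v z) :
    ∀ x : EuclideanSpace ℝ (Fin d), x ∉ K →
      HasGradientAt (mink K)
        ((⟪(mink K x)⁻¹ • x, v ((mink K x)⁻¹ • x)⟫)⁻¹ • v ((mink K x)⁻¹ • x)) x := by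
  intro x hx
  classical
  open Filter Topology Asymptotics in
  have hK0 : K ∈ 𝓝 0 := mem_interior_iff_mem_nhds.mp h0
  have hγcont : Continuous (gauge K) := continuous_gauge hconv hK0
  have hγx1 : 1 < gauge K x := by
    by_contra h
    push_neg at h
    exact hx (mem_of_gauge_le_one' hcl hconv hK0 h)
  have hγx0 : 0 < gauge K x := lt_trans one_pos hγx1
  have hmx : mink K x = gauge K x := mink_eq_gauge hcl hconv hK0 hγx1
  rw [hmx]
  show HasGradientAt (mink K) (wfn K v x) x
  -- eventually `mink = gauge`
  have hU : ∀ᶠ y in 𝓝 x, 1 < gauge K y :=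
    (isOpen_lt continuous_const hγcont).mem_nhds hγx1
  have hU0 : ∀ᶠ y in 𝓝 x, 0 < gauge K y :=
    hU.mono fun y hy => lt_trans one_pos hy
  have hEq : mink K =ᶠ[𝓝 x] gauge K :=
    hU.mono fun y hy => mink_eq_gauge hcl hconv hK0 hy
  -- continuity of `wfn` at `x`
  have hzx : (gauge K x)⁻¹ • x ∈ frontier K := normalized_mem_frontier hconv hK0 hγx0
  have hzcont : Filter.Tendsto (fun y => (gauge K y)⁻¹ • y) (𝓝 x)
      (𝓝 ((gauge K x)⁻¹ • x)) :=
    (((hγcont.tendsto x).inv₀ hγx0.ne').smul tendsto_id)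
  have hzwithin : Filter.Tendsto (fun y => (gauge K y)⁻¹ • y) (𝓝 x)
      (𝓝[frontier K] ((gauge K x)⁻¹ • x)) := by
    rw [tendsto_nhdsWithin_iff]
    exact ⟨hzcont, hU0.mono fun y hy => normalized_mem_frontier hconv hK0 hy⟩
  have hvz : Filter.Tendsto (fun y => v ((gauge K y)⁻¹ • y)) (𝓝 x)
      (𝓝 (v ((gauge K x)⁻¹ • x))) :=
    (v_tendsto hvnorm hvsupport hvunique hzx).comp hzwithin
  have hpx : (0 : ℝ) < ⟪(gauge K x)⁻¹ • x, v ((gauge K x)⁻¹ • x)⟫ := by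
    rw [real_inner_comm]
    exact inner_vz_pos hK0 hvnorm hvsupport hzx
  have hptend : Filter.Tendsto
      (fun y => ⟪(gauge K y)⁻¹ • y, v ((gauge K y)⁻¹ • y)⟫) (𝓝 x)
      (𝓝 (⟪(gauge K x)⁻¹ • x, v ((gauge K x)⁻¹ • x)⟫)) :=
    hzcont.inner hvz
  have hwcont : Filter.Tendsto (wfn K v) (𝓝 x) (𝓝 (wfn K v x)) :=
    (hptend.inv₀ hpx.ne').smul hvz
  -- the gauge has gradient `wfn K v x` at `x`
  have hgrad : HasGradientAt (gauge K) (wfn K v x) x := by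
    rw [hasGradientAt_iff_isLittleO, Asymptotics.isLittleO_iff]
    intro c hc
    have hdist : ∀ᶠ y in 𝓝 x, dist (wfn K v y) (wfn K v x) < c :=
      hwcont.eventually (Metric.ball_mem_nhds _ hc)
    filter_upwards [hU0, hdist] with y hy hd
    have h1 : ⟪wfn K v x, y⟫ ≤ gauge K y :=
      wfn_inner_le hcl hconv hK0 hvnorm hvsupport hγx0 y
    have h2 : ⟪wfn K v x, x⟫ = gauge K x :=
      wfn_inner_self hconv hK0 hvnorm hvsupport hγx0
    have h3 : ⟪wfn K v y, y⟫ = gauge K y :=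
      wfn_inner_self hconv hK0 hvnorm hvsupport hy
    have h4 : ⟪wfn K v y, x⟫ ≤ gauge K x :=
      wfn_inner_le hcl hconv hK0 hvnorm hvsupport hy x
    have hsubx : ⟪wfn K v x, y - x⟫ = ⟪wfn K v x, y⟫ - ⟪wfn K v x, x⟫ :=
      inner_sub_right _ _ _
    have hexp : ⟪wfn K v y - wfn K v x, y - x⟫ =
        ⟪wfn K v y, y⟫ - ⟪wfn K v y, x⟫ - ⟪wfn K v x, y⟫ + ⟪wfn K v x, x⟫ := by
      rw [inner_sub_left, inner_sub_right, inner_sub_right]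
      ring
    have hlow : 0 ≤ gauge K y - gauge K x - ⟪wfn K v x, y - x⟫ := by
      rw [hsubx]; linarith
    have hup : gauge K y - gauge K x - ⟪wfn K v x, y - x⟫ ≤
        ⟪wfn K v y - wfn K v x, y - x⟫ := by
      rw [hsubx, hexp]; linarith
    have hcs : ⟪wfn K v y - wfn K v x, y - x⟫ ≤ ‖wfn K v y - wfn K v x‖ * ‖y - x‖ :=
      real_inner_le_norm _ _
    have hwn : ‖wfn K v y - wfn K v x‖ < c := by rwa [← dist_eq_norm]
    rw [Real.norm_eq_abs, abs_of_nonneg hlow]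
    calc gauge K y - gauge K x - ⟪wfn K v x, y - x⟫
        ≤ ‖wfn K v y - wfn K v x‖ * ‖y - x‖ := le_trans hup hcs
      _ ≤ c * ‖y - x‖ := mul_le_mul_of_nonneg_right hwn.le (norm_nonneg _)
  -- transfer to `mink`
  rw [hasGradientAt_iff_hasFDerivAt] at hgrad ⊢
  exact hgrad.congr_of_eventuallyEq hEq
end

section
/- Shrinkage into the smoothed polytope: if K = {x : h(x) ≤ 0} contains rB_d and is contained in D·B_d, where h(x) = maxᵢ(αᵢᵀx + bᵢ) with unit vectors αᵢ, then for any x with h(x) = 0 there exists x′ with h(x′) ≤ −(log m)/a and ‖x − x′‖₂ ≤ D·log m/(r·a), obtained by shrinking x toward the origin. -/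
open scoped RealInnerProductSpace

theorem shrinkage_into_smoothed_polytope {d m : ℕ} (hm : 0 < m)
    (α : Fin m → EuclideanSpace ℝ (Fin d)) (b : Fin m → ℝ) (a r D : ℝ)
    (ha : 0 < a) (hr : 0 < r) (hrD : r ≤ D)
    (hα : ∀ i, ‖α i‖ = 1)
    (hball : Metric.closedBall (0 : EuclideanSpace ℝ (Fin d)) r ⊆
      {x : EuclideanSpace ℝ (Fin d) |
        Finset.univ.sup' (Finset.univ_nonempty_iff.mpr (Fin.pos_iff_nonempty.mp hm))
          (fun i => ⟪α i, x⟫ + b i) ≤ 0})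
    (hKD : {x : EuclideanSpace ℝ (Fin d) |
        Finset.univ.sup' (Finset.univ_nonempty_iff.mpr (Fin.pos_iff_nonempty.mp hm))
          (fun i => ⟪α i, x⟫ + b i) ≤ 0} ⊆
      Metric.closedBall (0 : EuclideanSpace ℝ (Fin d)) D)
    (ha_large : Real.log m / a ≤ r) :
    ∀ x : EuclideanSpace ℝ (Fin d),
      Finset.univ.sup' (Finset.univ_nonempty_iff.mpr (Fin.pos_iff_nonempty.mp hm))
          (fun i => ⟪α i, x⟫ + b i) = 0 →
      ∃ x' : EuclideanSpace ℝ (Fin d),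
        Finset.univ.sup' (Finset.univ_nonempty_iff.mpr (Fin.pos_iff_nonempty.mp hm))
            (fun i => ⟪α i, x'⟫ + b i) ≤ -(Real.log m) / a ∧
        ‖x - x'‖ ≤ D * Real.log m / (r * a) := by
  intro x hx
  set ε : ℝ := Real.log m / a with hε
  have hεnn : 0 ≤ ε := div_nonneg (Real.log_nonneg (by exact_mod_cast hm)) ha.le
  have hεr : ε ≤ r := ha_large
  have hlnn : 0 ≤ 1 - ε / r := by
    have : ε / r ≤ 1 := (div_le_one hr).mpr hεr
    linarith
  -- b i ≤ -r
  have hb : ∀ i, b i ≤ -r := by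
    intro i
    have hmem : (r : ℝ) • α i ∈ Metric.closedBall (0 : EuclideanSpace ℝ (Fin d)) r := by
      simp [norm_smul, hα i, abs_of_nonneg hr.le]
    have hsup := hball hmem
    have := Finset.le_sup' (fun j => ⟪α j, (r : ℝ) • α i⟫ + b j) (Finset.mem_univ i)
    have hinner : ⟪α i, (r : ℝ) • α i⟫ = r := by
      rw [real_inner_smul_right, real_inner_self_eq_norm_sq, hα i]; ring
    have : ⟪α i, (r : ℝ) • α i⟫ + b i ≤ 0 := le_trans this hsup
    rw [hinner] at this; linarith
  have hxD : ‖x‖ ≤ D := by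
    have := hKD (le_of_eq hx)
    simpa [Metric.mem_closedBall, dist_eq_norm] using this
  refine ⟨(1 - ε / r) • x, ?_, ?_⟩
  · apply Finset.sup'_le
    intro i _
    have hxi : ⟪α i, x⟫ + b i ≤ 0 := by
      have := Finset.le_sup' (fun j => ⟪α j, x⟫ + b j) (Finset.mem_univ i)
      rw [hx] at this; exact this
    have hinner : ⟪α i, (1 - ε / r) • x⟫ = (1 - ε / r) * ⟪α i, x⟫ :=
      real_inner_smul_right _ _ _
    rw [hinner]
    have h1 : (1 - ε / r) * ⟪α i, x⟫ + b i
        = (1 - ε / r) * (⟪α i, x⟫ + b i) + (ε / r) * b i := by ring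
    have h2 : (1 - ε / r) * (⟪α i, x⟫ + b i) ≤ 0 :=
      mul_nonpos_of_nonneg_of_nonpos hlnn hxi
    have h3 : (ε / r) * b i ≤ (ε / r) * (-r) :=
      mul_le_mul_of_nonneg_left (hb i) (div_nonneg hεnn hr.le)
    have h4 : (ε / r) * (-r) = -ε := by field_simp
    rw [neg_div, ← hε]
    linarith [h1, h2, h3, h4.le, h4.ge]
  · have : x - (1 - ε / r) • x = (ε / r) • x := by
      module
    rw [this, norm_smul, Real.norm_eq_abs, abs_of_nonneg (div_nonneg hεnn hr.le)]
    have h5 : ε / r * ‖x‖ ≤ ε / r * D :=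
      mul_le_mul_of_nonneg_left hxD (div_nonneg hεnn hr.le)
    have h6 : ε / r * D = D * Real.log m / (r * a) := by
      rw [hε]; field_simp
    linarith
end
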